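/- Let G = (V, E, w) be a weighted digraph on n vertices. Then there exist two weighted DAGs D₁ and D₂ on the vertex set V, each with at most n(n−1)/2 edges, such that: (i) d_G(u, v) ≤ d_{D₁}(u, v) and d_G(u, v) ≤ d_{D₂}(u, v) for all u, v ∈ V; and (ii) for every u ≠ v with u ⇝_G v, exactly one of u ⇝_{D₁} v and u ⇝_{D₂} v holds, and min(d_{D₁}(u, v), d_{D₂}(u, v)) = d_G(u, v). -/

import Mathlib

open scoped ENNReal BigOperators

/-- A weighted digraph: edges `E` with no self-loops and positive real weights. -/
structure WDigraph (V : Type) where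
  E : V → V → Prop
  no_self : ∀ v : V, ¬ E v v
  w : V → V → ℝ
  w_pos : ∀ u v : V, E u v → 0 < w u v

namespace WDigraph

variable {V : Type}

/-- `PathW G u v c`: there is a directed path from `u` to `v` in `G` of total weight `c`. -/
inductive PathW (G : WDigraph V) : V → V → ℝ → Prop
  | nil (u : V) : PathW G u u 0
  | cons {u x v : V} {c : ℝ} : G.E u x → PathW G x v c → PathW G u v (G.w u x + c)

/-- `u ⇝_G v`: there is a directed path from `u` to `v`. -/
def Reach (G : WDigraph V) (u v : V) : Prop := Relation.ReflTransGen G.E u v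

/-- The shortest-path quasimetric: infimum of path weights, `∞` if no path exists. -/
noncomputable def dist (G : WDigraph V) (u v : V) : ℝ≥0∞ :=
  ⨅ (c : ℝ) (_ : G.PathW u v c), ENNReal.ofReal c

/-- A DAG: no vertex has a nonempty directed path to itself. -/
def IsDAG (G : WDigraph V) : Prop := ∀ v : V, ¬ Relation.TransGen G.E v v

/-- Number of edges of the digraph. -/
noncomputable def edgeCount (G : WDigraph V) : ℕ := Nat.card {p : V × V // G.E p.1 p.2}

end WDigraph

/-!
Fix any linear order on `V`. Let `D₁` join `u` to `v` whenever `u` precedes `v` and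
`u ⇝_G v`, with weight `d_G(u, v)`, and let `D₂` be the same construction for the reversed
order. Edges go forward in the order, so both are DAGs, and a DAG has no 2-cycles, hence at
most `n(n-1)/2` edges. By the triangle inequality in `G` no path of `D₁` or `D₂` is shorter
than the corresponding `G`-distance. Finally, every reachable pair `u ≠ v` is a single edge
of exactly the DAG whose order puts `u` first, and it is unreachable in the other.
-/

namespace WDigraph

variable {V : Type} {G : WDigraph V}

lemma PathW.nonneg {u v : V} {c : ℝ} (h : G.PathW u v c) : 0 ≤ c := by
  induction h with
  | nil => exact le_rfl
  | cons he _ ih => exact add_nonneg (G.w_pos _ _ he).le ih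

lemma PathW.append {u x v : V} {c₁ c₂ : ℝ} (h₁ : G.PathW u x c₁) (h₂ : G.PathW x v c₂) :
    G.PathW u v (c₁ + c₂) := by
  induction h₁ with
  | nil => simpa using h₂
  | cons he _ ih => rw [add_assoc]; exact .cons he (ih h₂)

lemma PathW.reach {u v : V} {c : ℝ} (h : G.PathW u v c) : G.Reach u v := by
  induction h with
  | nil => exact .refl
  | cons he _ ih => exact .head he ih

lemma Reach.exists_pathW {u v : V} (h : G.Reach u v) : ∃ c, G.PathW u v c := by
  induction h using Relation.ReflTransGen.head_induction_on with
  | refl => exact ⟨0, .nil v⟩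
  | head he _ ih => exact ⟨_, .cons he ih.choose_spec⟩

lemma dist_le_of_pathW {u v : V} {c : ℝ} (h : G.PathW u v c) : G.dist u v ≤ ENNReal.ofReal c :=
  iInf₂_le c h

lemma dist_self (u : V) : G.dist u u = 0 :=
  nonpos_iff_eq_zero.1 (by simpa using dist_le_of_pathW (.nil (G := G) u))

lemma dist_ne_top_of_reach {u v : V} (h : G.Reach u v) : G.dist u v ≠ ⊤ :=
  let ⟨_, hc⟩ := h.exists_pathW
  ne_top_of_le_ne_top ENNReal.ofReal_ne_top (dist_le_of_pathW hc)

lemma dist_eq_top_of_not_reach {u v : V} (h : ¬ G.Reach u v) : G.dist u v = ⊤ :=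
  top_unique (le_iInf₂ fun _ hc => absurd hc.reach h)

lemma dist_triangle (u x v : V) : G.dist u v ≤ G.dist u x + G.dist x v := by
  simp only [dist, ENNReal.iInf_add, ENNReal.add_iInf]
  refine le_iInf₂ fun c₂ h₂ => le_iInf₂ fun c₁ h₁ => ?_
  rw [← ENNReal.ofReal_add h₁.nonneg h₂.nonneg]
  exact dist_le_of_pathW (h₁.append h₂)

lemma exists_pos_le_w [Finite V] (u : V) : ∃ m > 0, ∀ x, G.E u x → m ≤ G.w u x := by
  classical
  have : Nonempty V := ⟨u⟩
  let g : V → ℝ := fun x => if G.E u x then G.w u x else 1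
  have hg : ∀ x, 0 < g x := fun x => by
    by_cases hx : G.E u x
    · simpa [g, hx] using G.w_pos u x hx
    · simp [g, hx]
  obtain ⟨x₀, hx₀⟩ := Finite.exists_min g
  exact ⟨g x₀, hg x₀, fun x hx => by simpa [g, hx] using hx₀ x⟩

lemma dist_pos [Finite V] {u v : V} (huv : u ≠ v) : 0 < G.dist u v := by
  obtain ⟨m, hm, hle⟩ := exists_pos_le_w (G := G) u
  refine lt_of_lt_of_le (ENNReal.ofReal_pos.2 hm) (le_iInf₂ fun c hc => ?_)
  cases hc with
  | nil => exact absurd rfl huv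
  | cons he hp => exact ENNReal.ofReal_le_ofReal (le_add_of_le_of_nonneg (hle _ he) hp.nonneg)

lemma dist_le_dist_of_forall_edge {D : WDigraph V}
    (h : ∀ a b, D.E a b → G.dist a b ≤ ENNReal.ofReal (D.w a b)) (u v : V) :
    G.dist u v ≤ D.dist u v := by
  refine le_iInf₂ fun c hc => ?_
  induction hc with
  | nil u => simp [dist_self]
  | @cons a x b c he hp ih =>
    calc G.dist a b ≤ G.dist a x + G.dist x b := dist_triangle a x b
      _ ≤ ENNReal.ofReal (D.w a x) + ENNReal.ofReal c := add_le_add (h a x he) ih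
      _ = ENNReal.ofReal (D.w a x + c) :=
        (ENNReal.ofReal_add (D.w_pos a x he).le hp.nonneg).symm

lemma IsDAG.edgeCount_le [Fintype V] {D : WDigraph V} (hD : D.IsDAG) :
    D.edgeCount ≤ Fintype.card V * (Fintype.card V - 1) / 2 := by
  classical
  rw [← Nat.choose_two_right, ← Sym2.card_subtype_not_diag, ← Nat.card_eq_fintype_card]
  refine Nat.card_le_card_of_injective
    (fun p => ⟨s(p.1.1, p.1.2), Sym2.mk_isDiag_iff.not.2 fun h => D.no_self _ (h ▸ p.2)⟩) ?_
  rintro ⟨⟨a, b⟩, hab⟩ ⟨⟨c, d⟩, hcd⟩ hpq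
  rcases Sym2.mk_eq_mk_iff.1 (congrArg Subtype.val hpq) with h | h
  · exact Subtype.ext h
  · obtain ⟨rfl, rfl⟩ : a = d ∧ b = c := by simpa using h
    exact (hD a (.tail (.single hab) hcd)).elim

section ForwardClosure

variable [Finite V] {α : Type*} [Preorder α] {f : V → α}

noncomputable def forwardClosure (G : WDigraph V) (f : V → α) : WDigraph V where
  E u v := f u < f v ∧ G.Reach u v
  no_self _ h := lt_irrefl _ h.1
  w u v := (G.dist u v).toReal
  w_pos _ _ h := ENNReal.toReal_pos (dist_pos (ne_of_apply_ne f h.1.ne)).ne'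
    (dist_ne_top_of_reach h.2)

lemma forwardClosure_transGen {u v : V} (h : Relation.TransGen (G.forwardClosure f).E u v) :
    f u < f v ∧ G.Reach u v := by
  induction h with
  | single he => exact he
  | tail _ he ih => exact ⟨ih.1.trans he.1, ih.2.trans he.2⟩

lemma forwardClosure_isDAG : (G.forwardClosure f).IsDAG :=
  fun _ hv => lt_irrefl _ (forwardClosure_transGen hv).1

lemma forwardClosure_reach_iff {u v : V} :
    (G.forwardClosure f).Reach u v ↔ u = v ∨ f u < f v ∧ G.Reach u v := by
  refine ⟨fun h => ?_, ?_⟩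
  · rcases Relation.reflTransGen_iff_eq_or_transGen.1 h with rfl | h
    · exact .inl rfl
    · exact .inr (forwardClosure_transGen h)
  · rintro (rfl | he)
    · exact .refl
    · exact .single he

lemma dist_le_forwardClosure (u v : V) : G.dist u v ≤ (G.forwardClosure f).dist u v :=
  dist_le_dist_of_forall_edge (D := G.forwardClosure f)
    (fun _ _ he => (ENNReal.ofReal_toReal (dist_ne_top_of_reach he.2)).ge) u v

lemma forwardClosure_dist_of_reach {u v : V} (h : (G.forwardClosure f).Reach u v) :
    (G.forwardClosure f).dist u v = G.dist u v := by
  rcases forwardClosure_reach_iff.1 h with rfl | he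
  · rw [dist_self, dist_self]
  · refine le_antisymm ?_ (dist_le_forwardClosure u v)
    calc (G.forwardClosure f).dist u v ≤ ENNReal.ofReal ((G.forwardClosure f).w u v + 0) :=
          dist_le_of_pathW (.cons he (.nil v))
      _ = G.dist u v := by
          simpa [forwardClosure] using ENNReal.ofReal_toReal (dist_ne_top_of_reach he.2)

end ForwardClosure

end WDigraph

/-- every weighted digraph on `n` vertices admits two weighted DAGs
`D₁, D₂` on the same vertex set, each with at most `n(n−1)/2` edges, dominating the
distances of `G`, and such that for every reachable pair `u ≠ v` exactly one of the two
DAGs preserves the reachability and `min(d_{D₁}(u,v), d_{D₂}(u,v)) = d_G(u,v)`. -/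
theorem two_dags_exact_distances {V : Type} [Fintype V] (G : WDigraph V) :
    ∃ D₁ D₂ : WDigraph V,
      D₁.IsDAG ∧ D₂.IsDAG ∧
      D₁.edgeCount ≤ Fintype.card V * (Fintype.card V - 1) / 2 ∧
      D₂.edgeCount ≤ Fintype.card V * (Fintype.card V - 1) / 2 ∧
      (∀ u v : V, G.dist u v ≤ D₁.dist u v ∧ G.dist u v ≤ D₂.dist u v) ∧
      (∀ u v : V, u ≠ v → G.Reach u v →
        Xor' (D₁.Reach u v) (D₂.Reach u v) ∧
        min (D₁.dist u v) (D₂.dist u v) = G.dist u v) := by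
  let f := Fintype.equivFin V
  let D₁ := G.forwardClosure f
  let D₂ := G.forwardClosure (OrderDual.toDual ∘ f)
  have hD₁ : D₁.IsDAG := WDigraph.forwardClosure_isDAG
  have hD₂ : D₂.IsDAG := WDigraph.forwardClosure_isDAG
  refine ⟨D₁, D₂, hD₁, hD₂, hD₁.edgeCount_le, hD₂.edgeCount_le, fun u v =>
    ⟨WDigraph.dist_le_forwardClosure u v, WDigraph.dist_le_forwardClosure u v⟩,
    fun u v huv hG => ?_⟩
  have hxor : Xor' (D₁.Reach u v) (D₂.Reach u v) := by
    simp only [D₁, D₂, WDigraph.forwardClosure_reach_iff, huv, hG, false_or, and_true,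
      Function.comp_apply, OrderDual.toDual_lt_toDual]
    rcases lt_or_gt_of_ne (f.injective.ne huv) with h | h
    · exact .inl ⟨h, h.asymm⟩
    · exact .inr ⟨h, h.asymm⟩
  refine ⟨hxor, ?_⟩
  rcases hxor with ⟨h₁, h₂⟩ | ⟨h₂, h₁⟩
  · rw [WDigraph.forwardClosure_dist_of_reach h₁, WDigraph.dist_eq_top_of_not_reach h₂,
      min_top_right]
  · rw [WDigraph.forwardClosure_dist_of_reach h₂, WDigraph.dist_eq_top_of_not_reach h₁,
      min_top_left]
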